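/- (β-Lagrange identity.) Let s0 ≤ b with b ∈ I, let r : I → ℝ be continuous on [s0,b], and let y, z : I → ℂ belong to L²_β(s0,b), be continuous and differentiable at s0, with D_β y and D_β z differentiable at s0 and D_β y, D_β z, D_{β^{-1}}D_β y, D_{β^{-1}}D_β z bounded on the set {β^k(b) : k ∈ ℕ₀} ∪ {s0}. Then ∫_{s0}^{b} [ (ℓ_β y)(t)·conj(z(t)) − y(t)·conj((ℓ_β z)(t)) ] d_β t = [y, conj z](b) − [y, conj z](s0). -/

import Mathlib

open Function Set ComplexConjugate

/-- The β-derivative `D_β f` of `f : ℝ → ℂ`: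
`(f (β t) - f t) / (β t - t)` for `t ≠ s0`, and `f' s0` at `t = s0`. -/
noncomputable def Dq (β : ℝ → ℝ) (s0 : ℝ) (f : ℝ → ℂ) (t : ℝ) : ℂ :=
  if t = s0 then deriv f s0 else (f (β t) - f t) / ((β t : ℂ) - (t : ℂ))

/-- The β-integral `∫_{s0}^{x} f d_β = ∑_{k} (β^k x - β^{k+1} x) f (β^k x)` (complex-valued). -/
noncomputable def betaInt (β : ℝ → ℝ) (x : ℝ) (f : ℝ → ℂ) : ℂ :=
  ∑' k : ℕ, ((β^[k] x - β^[k + 1] x : ℝ) : ℂ) * f (β^[k] x)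

/-- The β-integral `∫_{s0}^{x} f d_β` for a real-valued integrand. -/
noncomputable def betaIntR (β : ℝ → ℝ) (x : ℝ) (f : ℝ → ℝ) : ℝ :=
  ∑' k : ℕ, (β^[k] x - β^[k + 1] x) * f (β^[k] x)

/-- `∫_a^b f d_β := ∫_{s0}^b f d_β - ∫_{s0}^a f d_β`. -/
noncomputable def betaIntAB (β : ℝ → ℝ) (a b : ℝ) (f : ℝ → ℂ) : ℂ :=
  betaInt β b f - betaInt β a f

/-- `∫_a^b f d_β` for a real-valued integrand. -/
noncomputable def betaIntRAB (β : ℝ → ℝ) (a b : ℝ) (f : ℝ → ℝ) : ℝ :=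
  betaIntR β b f - betaIntR β a f

/-- `D_β β⁻¹`, viewed as a complex-valued function. -/
noncomputable def DbinvC (β βinv : ℝ → ℝ) (s0 : ℝ) : ℝ → ℂ :=
  Dq β s0 fun u => (βinv u : ℂ)

/-- The β-Sturm–Liouville operator
`ℓ_β y (t) = -(D_β β⁻¹)(t) · (D_{β⁻¹} (D_β y))(t) + r t · y t`. -/
noncomputable def ellBeta (β βinv : ℝ → ℝ) (s0 : ℝ) (r : ℝ → ℝ) (y : ℝ → ℂ) (t : ℝ) : ℂ :=
  -(DbinvC β βinv s0 t) * Dq βinv s0 (Dq β s0 y) t + (r t : ℂ) * y t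

/-- The β-Wronskian `[y,z](t) = y t · (D_{β⁻¹} z) t - z t · (D_{β⁻¹} y) t`. -/
noncomputable def wronk (βinv : ℝ → ℝ) (s0 : ℝ) (y z : ℝ → ℂ) (t : ℝ) : ℂ :=
  y t * Dq βinv s0 z t - z t * Dq βinv s0 y t

/-- The β-exponential `e_{p,β}(t) = 1 / ∏_k (1 - p(β^k t)(β^k t - β^{k+1} t))`. -/
noncomputable def ebeta (β : ℝ → ℝ) (p : ℝ → ℂ) (t : ℝ) : ℂ :=
  1 / ∏' k : ℕ, (1 - p (β^[k] t) * ((β^[k] t - β^[k + 1] t : ℝ) : ℂ))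

/-- The β-exponential `E_{p,β}(t) = ∏_k (1 + p(β^k t)(β^k t - β^{k+1} t))`. -/
noncomputable def Ebeta (β : ℝ → ℝ) (p : ℝ → ℂ) (t : ℝ) : ℂ :=
  ∏' k : ℕ, (1 + p (β^[k] t) * ((β^[k] t - β^[k + 1] t : ℝ) : ℂ))

/-- `sin_{p,β}(t) = (e_{ip,β}(t) - e_{-ip,β}(t)) / (2i)`. -/
noncomputable def sinBeta (β : ℝ → ℝ) (p : ℝ → ℂ) (t : ℝ) : ℂ :=
  (ebeta β (fun s => Complex.I * p s) t - ebeta β (fun s => -(Complex.I * p s)) t) /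
    (2 * Complex.I)

/-- `cos_{p,β}(t) = (e_{ip,β}(t) + e_{-ip,β}(t)) / 2`. -/
noncomputable def cosBeta (β : ℝ → ℝ) (p : ℝ → ℂ) (t : ℝ) : ℂ :=
  (ebeta β (fun s => Complex.I * p s) t + ebeta β (fun s => -(Complex.I * p s)) t) / 2

/-!
Along the orbit `t_k = β^[k] b`, which decreases to the fixed point `s0`, the `k`-th term
`(t_k - t_{k+1}) · F(t_k)` of the `β`-integral of `F = ℓ_β y · z̄ - y · conj (ℓ_β z)` equals
`W(t_k) - W(t_{k+1})` for the Wronskian `W = [y, z̄]`: this is a finite-difference computation,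
in which `D_{β⁻¹} f (t) = D_β f (β⁻¹ t)`. Hence the partial sums are `W(b) - W(t_n)`, and
`W(t_n) → W(s0)` by continuity of `y`, `z`, `D_β y`, `D_β z` at `s0`. The series converges
absolutely because the real potential `r` cancels from each term, leaving a bound
`(t_{k-1} - t_k) · C` with `C` built from the bounds on `D_{β⁻¹} D_β y`, `D_{β⁻¹} D_β z` and on
the convergent sequences `y(t_k)`, `z(t_k)`.
-/

open Filter Topology

structure IsBetaShift (I : Set ℝ) (β βinv : ℝ → ℝ) (s0 : ℝ) : Prop where
  ordConnected : I.OrdConnected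
  strictMonoOn : StrictMonoOn β I
  continuousOn : ContinuousOn β I
  mapsTo : MapsTo β I I
  invOn : InvOn βinv β I I
  mem : s0 ∈ I
  fixed : β s0 = s0
  sign : ∀ t ∈ I, (t - s0) * (β t - t) ≤ 0
  eq_of_sign_eq_zero : ∀ t ∈ I, (t - s0) * (β t - t) = 0 → t = s0

noncomputable def lagrangeForm (β βinv : ℝ → ℝ) (s0 : ℝ) (r : ℝ → ℝ) (y z : ℝ → ℂ) (t : ℝ) : ℂ :=
  ellBeta β βinv s0 r y t * conj (z t) - y t * conj (ellBeta β βinv s0 r z t)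

theorem Dq_conj (β : ℝ → ℝ) (s0 : ℝ) (f : ℝ → ℂ) :
    Dq β s0 (fun t => conj (f t)) = fun t => conj (Dq β s0 f t) := by
  funext t
  by_cases ht : t = s0
  · simp only [Dq, if_pos ht]
    exact deriv.star
  · simp [Dq, if_neg ht, map_div₀]

theorem Dq_apply_base_eq (β βinv : ℝ → ℝ) (s0 : ℝ) (f : ℝ → ℂ) :
    Dq βinv s0 f s0 = Dq β s0 f s0 := by
  simp [Dq]

theorem Dq_inv_eq_Dq_of_apply_eq {β βinv : ℝ → ℝ} {s0 a p : ℝ} (hβa : β a = p)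
    (hβinv : βinv p = a) (hp : p ≠ s0) (ha : a ≠ s0) (f : ℝ → ℂ) :
    Dq βinv s0 f p = Dq β s0 f a := by
  rw [Dq, Dq, if_neg hp, if_neg ha, hβa, hβinv, ← neg_sub (f p), ← neg_sub (p : ℂ), neg_div_neg_eq]

theorem wronk_eq_of_apply_eq {β βinv : ℝ → ℝ} {s0 a p : ℝ} (hβa : β a = p)
    (hβinv : βinv p = a) (hp : p ≠ s0) (ha : a ≠ s0) (y w : ℝ → ℂ) :
    wronk βinv s0 y w p = y p * Dq β s0 w a - w p * Dq β s0 y a := by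
  rw [wronk, Dq_inv_eq_Dq_of_apply_eq hβa hβinv hp ha, Dq_inv_eq_Dq_of_apply_eq hβa hβinv hp ha]

theorem hasSum_of_telescoping {E : Type*} [NormedAddCommGroup E] [CompleteSpace E]
    {g w : ℕ → E} {c : ℕ → ℝ} {l : E} (hg : ∀ k, g k = w k - w (k + 1))
    (hw : Tendsto w atTop (𝓝 l)) (hc : Summable c) (hgc : ∀ k, ‖g (k + 1)‖ ≤ c k) :
    HasSum g (w 0 - l) := by
  have hgs : Summable g := (summable_nat_add_iff 1).mp (Summable.of_norm_bounded hc hgc)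
  rw [hgs.hasSum_iff_tendsto_nat]
  simp only [hg, Finset.sum_range_sub']
  exact tendsto_const_nhds.sub hw

namespace IsBetaShift

variable {I : Set ℝ} {β βinv : ℝ → ℝ} {s0 t b : ℝ}

theorem apply_ne_self (h : IsBetaShift I β βinv s0) (ht : t ∈ I) (hts : t ≠ s0) : β t ≠ t :=
  fun heq => hts (h.eq_of_sign_eq_zero t ht (by rw [heq, sub_self, mul_zero]))

theorem apply_lt_self (h : IsBetaShift I β βinv s0) (ht : t ∈ I) (hts : s0 < t) : β t < t := by
  have := h.sign t ht
  exact (le_of_not_gt fun hlt => by nlinarith).lt_of_ne (h.apply_ne_self ht hts.ne')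

theorem lt_apply (h : IsBetaShift I β βinv s0) (ht : t ∈ I) (hts : s0 < t) : s0 < β t :=
  h.fixed ▸ h.strictMonoOn h.mem ht hts

theorem inv_ne_base (h : IsBetaShift I β βinv s0) (ht : t ∈ I) (hts : t ≠ s0) : βinv t ≠ s0 := by
  intro heq
  have := h.invOn.2 ht
  rw [heq, h.fixed] at this
  exact hts this.symm

theorem inv_ne_self (h : IsBetaShift I β βinv s0) (ht : t ∈ I) (hts : t ≠ s0) : βinv t ≠ t := by
  intro heq
  have := h.invOn.2 ht
  rw [heq] at this
  exact h.apply_ne_self ht hts this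

theorem iterate_mem (h : IsBetaShift I β βinv s0) (hb : b ∈ I) (k : ℕ) : β^[k] b ∈ I :=
  h.mapsTo.iterate k hb

theorem lt_iterate (h : IsBetaShift I β βinv s0) (hb : b ∈ I) (hsb : s0 < b) (k : ℕ) :
    s0 < β^[k] b := by
  induction k with
  | zero => exact hsb
  | succ k ih => rw [iterate_succ_apply']; exact h.lt_apply (h.iterate_mem hb k) ih

theorem iterate_succ_lt (h : IsBetaShift I β βinv s0) (hb : b ∈ I) (hsb : s0 < b) (k : ℕ) :
    β^[k + 1] b < β^[k] b := by
  rw [iterate_succ_apply']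
  exact h.apply_lt_self (h.iterate_mem hb k) (h.lt_iterate hb hsb k)

theorem inv_iterate_succ (h : IsBetaShift I β βinv s0) (hb : b ∈ I) (k : ℕ) :
    βinv (β^[k + 1] b) = β^[k] b := by
  rw [iterate_succ_apply']
  exact h.invOn.1 (h.iterate_mem hb k)

theorem summable_iterate_sub (h : IsBetaShift I β βinv s0) (hb : b ∈ I) (hsb : s0 < b) :
    Summable fun k => β^[k] b - β^[k + 1] b := by
  refine summable_of_sum_range_le (c := b - s0)
    (fun k => (sub_pos.2 (h.iterate_succ_lt hb hsb k)).le) fun n => ?_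
  rw [Finset.sum_range_sub' (fun k => β^[k] b), iterate_zero_apply]
  linarith [h.lt_iterate hb hsb n]

/-- The limit of the decreasing orbit lies in `[s0, b] ⊆ I`, so by continuity it is fixed by `β`. -/
theorem tendsto_iterate (h : IsBetaShift I β βinv s0) (hb : b ∈ I) (hsb : s0 < b) :
    Tendsto (fun k => β^[k] b) atTop (𝓝 s0) := by
  set T : ℕ → ℝ := fun k => β^[k] b
  have hbdd : BddBelow (range T) := ⟨s0, forall_mem_range.2 fun k => (h.lt_iterate hb hsb k).le⟩
  have hT : Tendsto T atTop (𝓝 (⨅ k, T k)) :=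
    tendsto_atTop_ciInf (antitone_nat_of_succ_le fun k => (h.iterate_succ_lt hb hsb k).le) hbdd
  have hLI : (⨅ k, T k) ∈ I :=
    h.ordConnected.out h.mem hb ⟨le_ciInf fun k => (h.lt_iterate hb hsb k).le, ciInf_le hbdd 0⟩
  have hβT : Tendsto (fun k => β (T k)) atTop (𝓝 (β (⨅ k, T k))) :=
    (h.continuousOn _ hLI).tendsto.comp
      (tendsto_nhdsWithin_iff.2 ⟨hT, Eventually.of_forall (h.iterate_mem hb)⟩)
  have hfixed : β (⨅ k, T k) = ⨅ k, T k := by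
    refine tendsto_nhds_unique hβT ?_
    simpa only [T, ← iterate_succ_apply' β] using (tendsto_add_atTop_iff_nat 1).2 hT
  rwa [h.eq_of_sign_eq_zero _ hLI (by rw [hfixed, sub_self, mul_zero])] at hT

theorem gap_mul_lagrangeForm_eq_wronk_sub (h : IsBetaShift I β βinv s0) (r : ℝ → ℝ)
    (y z : ℝ → ℂ) (ht : t ∈ I) (hts : s0 < t) :
    ((t - β t : ℝ) : ℂ) * lagrangeForm β βinv s0 r y z t =
      wronk βinv s0 y (fun u => conj (z u)) t - wronk βinv s0 y (fun u => conj (z u)) (β t) := by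
  have hq := h.lt_apply ht hts
  have hinvq : βinv (β t) = t := h.invOn.1 ht
  have hβa : β (βinv t) = t := h.invOn.2 ht
  have d1 : (βinv t : ℂ) - t ≠ 0 := sub_ne_zero.2 (mod_cast h.inv_ne_self ht hts.ne')
  have d2 : (β t : ℂ) - t ≠ 0 := sub_ne_zero.2 (mod_cast h.apply_ne_self ht hts.ne')
  have d3 : (t : ℂ) - βinv t ≠ 0 := sub_ne_zero.2 (mod_cast (h.inv_ne_self ht hts.ne').symm)
  have d4 : (t : ℂ) - β t ≠ 0 := sub_ne_zero.2 (mod_cast (h.apply_ne_self ht hts.ne').symm)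
  simp only [lagrangeForm, ellBeta, DbinvC, wronk, Dq, if_neg hts.ne', if_neg hq.ne',
    if_neg (h.inv_ne_base ht hts.ne'), hinvq, hβa, map_add, map_mul, map_sub, map_div₀, map_neg,
    Complex.conj_ofReal]
  push_cast
  field_simp
  ring

/-- The potential `r` is real, so it cancels from the Lagrange form. -/
theorem gap_mul_lagrangeForm_eq_inv_gap_mul (h : IsBetaShift I β βinv s0) (r : ℝ → ℝ)
    (y z : ℝ → ℂ) (ht : t ∈ I) (hts : s0 < t) :
    ((t - β t : ℝ) : ℂ) * lagrangeForm β βinv s0 r y z t =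
      ((t - βinv t : ℝ) : ℂ) * (Dq βinv s0 (Dq β s0 y) t * conj (z t) -
        y t * conj (Dq βinv s0 (Dq β s0 z) t)) := by
  have hinvq : βinv (β t) = t := h.invOn.1 ht
  have d2 : (β t : ℂ) - t ≠ 0 := sub_ne_zero.2 (mod_cast h.apply_ne_self ht hts.ne')
  have d4 : (t : ℂ) - β t ≠ 0 := sub_ne_zero.2 (mod_cast (h.apply_ne_self ht hts.ne').symm)
  simp only [lagrangeForm, ellBeta, DbinvC, Dq, if_neg hts.ne', hinvq, map_add, map_mul, map_sub,
    map_div₀, map_neg, Complex.conj_ofReal]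
  push_cast
  field_simp
  ring

theorem norm_gap_mul_lagrangeForm_le (h : IsBetaShift I β βinv s0) (hb : b ∈ I) (hsb : s0 < b)
    (r : ℝ → ℝ) {y z : ℝ → ℂ} {My Mz Cy Cz : ℝ} (hy : ∀ k, ‖y (β^[k] b)‖ ≤ My)
    (hz : ∀ k, ‖z (β^[k] b)‖ ≤ Mz) (hDDy : ∀ k, ‖Dq βinv s0 (Dq β s0 y) (β^[k] b)‖ ≤ Cy)
    (hDDz : ∀ k, ‖Dq βinv s0 (Dq β s0 z) (β^[k] b)‖ ≤ Cz) (k : ℕ) :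
    ‖((β^[k + 1] b - β^[k + 1 + 1] b : ℝ) : ℂ) * lagrangeForm β βinv s0 r y z (β^[k + 1] b)‖ ≤
      (β^[k] b - β^[k + 1] b) * (Cy * Mz + My * Cz) := by
  have hgap : 0 ≤ β^[k] b - β^[k + 1] b := (sub_pos.2 (h.iterate_succ_lt hb hsb k)).le
  rw [iterate_succ_apply' β (k + 1),
    h.gap_mul_lagrangeForm_eq_inv_gap_mul r y z (h.iterate_mem hb _) (h.lt_iterate hb hsb _),
    h.inv_iterate_succ hb, norm_mul, Complex.norm_real, Real.norm_eq_abs,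
    abs_sub_comm, abs_of_nonneg hgap]
  refine mul_le_mul_of_nonneg_left ((norm_sub_le _ _).trans ?_) hgap
  rw [norm_mul, norm_mul, RCLike.norm_conj, RCLike.norm_conj]
  have hCy : 0 ≤ Cy := (norm_nonneg _).trans (hDDy 0)
  have hMy : 0 ≤ My := (norm_nonneg _).trans (hy 0)
  gcongr
  exacts [hDDy _, hz _, hy _, hDDz _]

theorem tendsto_wronk_iterate (h : IsBetaShift I β βinv s0) (hb : b ∈ I) (hsb : s0 < b)
    {y w : ℝ → ℂ} (hy : ContinuousAt y s0) (hw : ContinuousAt w s0)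
    (hDy : ContinuousAt (Dq β s0 y) s0) (hDw : ContinuousAt (Dq β s0 w) s0) :
    Tendsto (fun k => wronk βinv s0 y w (β^[k] b)) atTop (𝓝 (wronk βinv s0 y w s0)) := by
  have hT := h.tendsto_iterate hb hsb
  have hinvT : Tendsto (fun k => βinv (β^[k] b)) atTop (𝓝 s0) := by
    refine (tendsto_add_atTop_iff_nat 1).1 ?_
    simpa only [h.inv_iterate_succ hb] using hT
  have hwronk : ∀ k, wronk βinv s0 y w (β^[k] b) =
      y (β^[k] b) * Dq β s0 w (βinv (β^[k] b)) - w (β^[k] b) * Dq β s0 y (βinv (β^[k] b)) :=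
    fun k => wronk_eq_of_apply_eq (h.invOn.2 (h.iterate_mem hb k)) rfl
      (h.lt_iterate hb hsb k).ne' (h.inv_ne_base (h.iterate_mem hb k) (h.lt_iterate hb hsb k).ne')
      y w
  rw [wronk, Dq_apply_base_eq β βinv s0 w, Dq_apply_base_eq β βinv s0 y]
  refine Tendsto.congr (fun k => (hwronk k).symm) ?_
  exact ((hy.tendsto.comp hT).mul (hDw.tendsto.comp hinvT)).sub
    ((hw.tendsto.comp hT).mul (hDy.tendsto.comp hinvT))

end IsBetaShift

theorem stmt_6_general
    (I : Set ℝ) (hIconn : I.OrdConnected)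
    (β βinv : ℝ → ℝ) (s0 : ℝ)
    (hmono : StrictMonoOn β I) (hcont : ContinuousOn β I)
    (hbij : Set.BijOn β I I) (hinv : Set.InvOn βinv β I I)
    (hs0I : s0 ∈ I) (hfix : β s0 = s0)
    (hsign : ∀ t ∈ I, (t - s0) * (β t - t) ≤ 0)
    (huniq : ∀ t ∈ I, (t - s0) * (β t - t) = 0 → t = s0)
    (b : ℝ) (hb : b ∈ I) (hs0b : s0 ≤ b)
    (r : ℝ → ℝ) (y z : ℝ → ℂ)
    (hyc : ContinuousAt y s0) (hzc : ContinuousAt z s0)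
    (hDyd : DifferentiableAt ℝ (Dq β s0 y) s0) (hDzd : DifferentiableAt ℝ (Dq β s0 z) s0)
    (hDDyb : ∃ C, ∀ t ∈ insert s0 (Set.range fun j : ℕ => β^[j] b), ‖Dq βinv s0 (Dq β s0 y) t‖ ≤ C)
    (hDDzb : ∃ C, ∀ t ∈ insert s0 (Set.range fun j : ℕ => β^[j] b), ‖Dq βinv s0 (Dq β s0 z) t‖ ≤ C) :
    betaInt β b (fun t =>
        ellBeta β βinv s0 r y t * conj (z t) - y t * conj (ellBeta β βinv s0 r z t)) =
      wronk βinv s0 y (fun t => conj (z t)) b - wronk βinv s0 y (fun t => conj (z t)) s0 := by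
  have hβ : IsBetaShift I β βinv s0 :=
    ⟨hIconn, hmono, hcont, hbij.mapsTo, hinv, hs0I, hfix, hsign, huniq⟩
  rcases hs0b.eq_or_lt with rfl | hsb
  · simp [betaInt, iterate_fixed hfix]
  have hT := hβ.tendsto_iterate hb hsb
  obtain ⟨My, hMy⟩ := (Metric.isBounded_range_of_tendsto _ (hyc.tendsto.comp hT)).exists_norm_le
  obtain ⟨Mz, hMz⟩ := (Metric.isBounded_range_of_tendsto _ (hzc.tendsto.comp hT)).exists_norm_le
  obtain ⟨Cy, hCy⟩ := hDDyb
  obtain ⟨Cz, hCz⟩ := hDDzb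
  have hmem : ∀ k, β^[k] b ∈ insert s0 (range fun j : ℕ => β^[j] b) :=
    fun k => mem_insert_of_mem _ ⟨k, rfl⟩
  have hDzc : ContinuousAt (Dq β s0 fun t => conj (z t)) s0 := by
    rw [Dq_conj]
    exact Complex.continuous_conj.continuousAt.comp hDzd.continuousAt
  refine (hasSum_of_telescoping (fun k => ?_)
    (hβ.tendsto_wronk_iterate hb hsb hyc (Complex.continuous_conj.continuousAt.comp hzc)
      hDyd.continuousAt hDzc)
    ((hβ.summable_iterate_sub hb hsb).mul_right _)
    (hβ.norm_gap_mul_lagrangeForm_le hb hsb r (fun k => hMy _ ⟨k, rfl⟩) (fun k => hMz _ ⟨k, rfl⟩)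
      (fun k => hCy _ (hmem k)) (fun k => hCz _ (hmem k)))).tsum_eq
  rw [iterate_succ_apply']
  exact hβ.gap_mul_lagrangeForm_eq_wronk_sub r y z (hβ.iterate_mem hb k)
    (hβ.lt_iterate hb hsb k)

theorem stmt_6
    (I : Set ℝ) (hIconn : I.OrdConnected)
    (β βinv : ℝ → ℝ) (s0 : ℝ)
    (hmono : StrictMonoOn β I) (hcont : ContinuousOn β I)
    (hbij : Set.BijOn β I I) (hinv : Set.InvOn βinv β I I)
    (hs0I : s0 ∈ I) (hfix : β s0 = s0)
    (hsign : ∀ t ∈ I, (t - s0) * (β t - t) ≤ 0)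
    (huniq : ∀ t ∈ I, (t - s0) * (β t - t) = 0 → t = s0)
    (b : ℝ) (hb : b ∈ I) (hs0b : s0 ≤ b)
    (r : ℝ → ℝ) (hr : ContinuousOn r (Set.Icc s0 b)) (y z : ℝ → ℂ)
    (hyL2 : Summable fun j : ℕ => (β^[j] b - β^[j + 1] b) * ‖y (β^[j] b)‖ ^ 2)
    (hzL2 : Summable fun j : ℕ => (β^[j] b - β^[j + 1] b) * ‖z (β^[j] b)‖ ^ 2)
    (hyc : ContinuousAt y s0) (hzc : ContinuousAt z s0)
    (hyd : DifferentiableAt ℝ y s0) (hzd : DifferentiableAt ℝ z s0)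
    (hDyd : DifferentiableAt ℝ (Dq β s0 y) s0) (hDzd : DifferentiableAt ℝ (Dq β s0 z) s0)
    (hDyb : ∃ C, ∀ t ∈ insert s0 (Set.range fun j : ℕ => β^[j] b), ‖Dq β s0 y t‖ ≤ C)
    (hDzb : ∃ C, ∀ t ∈ insert s0 (Set.range fun j : ℕ => β^[j] b), ‖Dq β s0 z t‖ ≤ C)
    (hDDyb : ∃ C, ∀ t ∈ insert s0 (Set.range fun j : ℕ => β^[j] b), ‖Dq βinv s0 (Dq β s0 y) t‖ ≤ C)
    (hDDzb : ∃ C, ∀ t ∈ insert s0 (Set.range fun j : ℕ => β^[j] b), ‖Dq βinv s0 (Dq β s0 z) t‖ ≤ C) :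
    betaInt β b (fun t =>
        ellBeta β βinv s0 r y t * conj (z t) - y t * conj (ellBeta β βinv s0 r z t)) =
      wronk βinv s0 y (fun t => conj (z t)) b - wronk βinv s0 y (fun t => conj (z t)) s0 :=
  stmt_6_general I hIconn β βinv s0 hmono hcont hbij hinv hs0I hfix hsign huniq b hb hs0b r y z hyc
    hzc hDyd hDzd hDDyb hDDzb
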